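/- Let X₁, X₂, X₃, X₄ be independent, identically distributed real random variables with E|X₁|⁴ < ∞. Then E[ψ₄(X₁, X₂, X₃, X₄)] = E[(X₁ − E X₁)⁴], i.e. ψ₄ is an unbiased kernel for the fourth central moment. -/

import Mathlib

open MeasureTheory ProbabilityTheory

lemma integrable_pow_of_memLp4 {Ω : Type*} [MeasureSpace Ω]
    [IsProbabilityMeasure (ℙ : Measure Ω)]
    {f : Ω → ℝ} (hf : MemLp f 4 (ℙ : Measure Ω)) (k : ℕ) (hk : k ≤ 4) :
    Integrable (fun ω => f ω ^ k) (ℙ : Measure Ω) := by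
  have h4 : Integrable (fun ω => ‖f ω‖ ^ ((4:ENNReal)).toReal) (ℙ : Measure Ω) :=
    hf.integrable_norm_rpow (by norm_num) (by norm_num)
  have h4' : Integrable (fun ω => |f ω| ^ (4:ℕ)) (ℙ : Measure Ω) := by
    have : ∀ ω, ‖f ω‖ ^ ((4:ENNReal)).toReal = |f ω| ^ (4:ℕ) := by
      intro ω
      rw [Real.norm_eq_abs]
      rw [show ((4:ENNReal)).toReal = ((4:ℕ):ℝ) by norm_num, Real.rpow_natCast]
    simp only [this] at h4
    exact h4
  refine Integrable.mono' ((integrable_const (1:ℝ)).add h4') ?_ ?_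
  · exact (hf.aestronglyMeasurable.aemeasurable.pow_const k).aestronglyMeasurable
  · filter_upwards with ω
    have h0 : (0:ℝ) ≤ |f ω| := abs_nonneg _
    rw [Real.norm_eq_abs, abs_pow]
    rcases le_total (|f ω|) 1 with h1 | h1
    · have h2 : |f ω| ^ k ≤ 1 := pow_le_one₀ h0 h1
      have h3 : (0:ℝ) ≤ |f ω| ^ 4 := pow_nonneg h0 4
      simp only [Pi.add_apply]
      linarith
    · have h2 : |f ω| ^ k ≤ |f ω| ^ 4 := pow_le_pow_right₀ h1 hk
      refine le_trans h2 ?_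
      simp only [Pi.add_apply]
      linarith

/-- The fourth central moment kernel (Heffernan 1997):
`ψ₄(x₁,…,x₄) = (1/4)Σ_i x_i⁴ − (1/3)Σ_{i≠j} x_i³ x_j
  + (1/2)Σ_{i∉{j,l}, j<l} x_i² x_j x_l − 3x₁x₂x₃x₄`. -/
noncomputable def psi4 (x1 x2 x3 x4 : ℝ) : ℝ :=
  (1 / 4) * (x1 ^ 4 + x2 ^ 4 + x3 ^ 4 + x4 ^ 4)
    - (1 / 3) * (x1 ^ 3 * x2 + x1 ^ 3 * x3 + x1 ^ 3 * x4
        + x2 ^ 3 * x1 + x2 ^ 3 * x3 + x2 ^ 3 * x4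
        + x3 ^ 3 * x1 + x3 ^ 3 * x2 + x3 ^ 3 * x4
        + x4 ^ 3 * x1 + x4 ^ 3 * x2 + x4 ^ 3 * x3)
    + (1 / 2) * (x3 ^ 2 * x1 * x2 + x4 ^ 2 * x1 * x2
        + x2 ^ 2 * x1 * x3 + x4 ^ 2 * x1 * x3
        + x2 ^ 2 * x1 * x4 + x3 ^ 2 * x1 * x4
        + x1 ^ 2 * x2 * x3 + x4 ^ 2 * x2 * x3
        + x1 ^ 2 * x2 * x4 + x3 ^ 2 * x2 * x4
        + x1 ^ 2 * x3 * x4 + x2 ^ 2 * x3 * x4)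
    - 3 * x1 * x2 * x3 * x4

/-- Let `X₁, X₂, X₃, X₄` be i.i.d. real random variables with `E|X₁|⁴ < ∞`. Then
`E[ψ₄(X₁,X₂,X₃,X₄)] = E[(X₁ − EX₁)⁴]`: `ψ₄` is an unbiased kernel for the fourth
central moment. -/
theorem stmt7 {Ω : Type*} [MeasureSpace Ω] [IsProbabilityMeasure (ℙ : Measure Ω)]
    (X : Fin 4 → Ω → ℝ) (hmeas : ∀ i, Measurable (X i))
    (hindep : iIndepFun X (ℙ : Measure Ω))
    (hid : ∀ i, IdentDistrib (X i) (X 0) (ℙ : Measure Ω) (ℙ : Measure Ω))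
    (hmom : MemLp (X 0) 4 (ℙ : Measure Ω)) :
    ∫ ω, psi4 (X 0 ω) (X 1 ω) (X 2 ω) (X 3 ω) ∂(ℙ : Measure Ω)
      = ∫ ω, (X 0 ω - ∫ ω', X 0 ω' ∂(ℙ : Measure Ω)) ^ 4 ∂(ℙ : Measure Ω) := by
  have hmi : ∀ i, MemLp (X i) 4 (ℙ : Measure Ω) := fun i => (hid i).symm.memLp_snd hmom
  have hint : ∀ (i : Fin 4) (k : ℕ), k ≤ 4 → Integrable (fun ω => X i ω ^ k) (ℙ : Measure Ω) :=
    fun i k hk => integrable_pow_of_memLp4 (hmi i) k hk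
  have hint1 : ∀ i : Fin 4, Integrable (X i) (ℙ : Measure Ω) := by
    intro i
    simpa using hint i 1 (by norm_num)
  have hsm : ∀ (i : Fin 4) (k : ℕ), AEStronglyMeasurable (fun ω => X i ω ^ k) (ℙ : Measure Ω) :=
    fun i k => ((hmeas i).pow_const k).aestronglyMeasurable
  have hmomk : ∀ (i : Fin 4) (k : ℕ), ∫ ω, X i ω ^ k ∂(ℙ : Measure Ω) = ∫ ω, X 0 ω ^ k ∂(ℙ : Measure Ω) := by
    intro i k
    have := ((hid i).comp (measurable_id.pow_const k)).integral_eq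
    simpa [Function.comp] using this
  have hmom1 : ∀ i : Fin 4, ∫ ω, X i ω ∂(ℙ : Measure Ω) = ∫ ω, X 0 ω ∂(ℙ : Measure Ω) := fun i => (hid i).integral_eq
  have hpair : ∀ i j : Fin 4, i ≠ j → ∫ ω, X i ω * X j ω ∂(ℙ : Measure Ω) = (∫ ω, X 0 ω ∂(ℙ : Measure Ω)) * (∫ ω, X 0 ω ∂(ℙ : Measure Ω)) := by
    intro i j hij
    have h := IndepFun.integral_fun_mul_eq_mul_integral (hindep.indepFun hij) (hmeas i).aestronglyMeasurable
      (hmeas j).aestronglyMeasurable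
    rw [h, hmom1 i, hmom1 j]
  have hcube : ∀ i j : Fin 4, i ≠ j → ∫ ω, X i ω ^ 3 * X j ω ∂(ℙ : Measure Ω) = (∫ ω, X 0 ω ^ 3 ∂(ℙ : Measure Ω)) * (∫ ω, X 0 ω ∂(ℙ : Measure Ω)) := by
    intro i j hij
    have hI : IndepFun (fun ω => X i ω ^ 3) (X j) (ℙ : Measure Ω) :=
      (hindep.indepFun hij).comp (measurable_id.pow_const 3) measurable_id
    have h := IndepFun.integral_fun_mul_eq_mul_integral hI (hsm i 3) (hmeas j).aestronglyMeasurable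
    rw [h, hmomk i 3, hmom1 j]
  have hsq : ∀ i j k : Fin 4, i ≠ j → i ≠ k → j ≠ k →
      ∫ ω, X i ω ^ 2 * X j ω * X k ω ∂(ℙ : Measure Ω) = (∫ ω, X 0 ω ^ 2 ∂(ℙ : Measure Ω)) * ((∫ ω, X 0 ω ∂(ℙ : Measure Ω)) * (∫ ω, X 0 ω ∂(ℙ : Measure Ω))) := by
    intro i j k hij hik hjk
    have hI : IndepFun (fun ω => X i ω ^ 2) (fun ω => X j ω * X k ω) (ℙ : Measure Ω) :=
      (hindep.indepFun_mul_right hmeas i j k hij hik).comp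
        (measurable_id.pow_const 2) measurable_id
    have h := IndepFun.integral_fun_mul_eq_mul_integral hI (hsm i 2) ((hmeas j).mul (hmeas k)).aestronglyMeasurable
    calc ∫ ω, X i ω ^ 2 * X j ω * X k ω ∂(ℙ : Measure Ω)
        = ∫ ω, X i ω ^ 2 * (X j ω * X k ω) ∂(ℙ : Measure Ω) := by simp only [mul_assoc]
      _ = (∫ ω, X 0 ω ^ 2 ∂(ℙ : Measure Ω)) * ((∫ ω, X 0 ω ∂(ℙ : Measure Ω)) * (∫ ω, X 0 ω ∂(ℙ : Measure Ω))) := by rw [h, hmomk i 2, hpair j k hjk]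
  have hquad : ∫ ω, X 0 ω * X 1 ω * X 2 ω * X 3 ω ∂(ℙ : Measure Ω)
      = ((∫ ω, X 0 ω ∂(ℙ : Measure Ω)) * (∫ ω, X 0 ω ∂(ℙ : Measure Ω))) * ((∫ ω, X 0 ω ∂(ℙ : Measure Ω)) * (∫ ω, X 0 ω ∂(ℙ : Measure Ω))) := by
    have hI : IndepFun (fun ω => X 0 ω * X 1 ω) (fun ω => X 2 ω * X 3 ω) (ℙ : Measure Ω) :=
      hindep.indepFun_mul_mul hmeas 0 1 2 3 (by decide) (by decide) (by decide) (by decide)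
    have h := IndepFun.integral_fun_mul_eq_mul_integral hI ((hmeas 0).mul (hmeas 1)).aestronglyMeasurable
      ((hmeas 2).mul (hmeas 3)).aestronglyMeasurable
    calc ∫ ω, X 0 ω * X 1 ω * X 2 ω * X 3 ω ∂(ℙ : Measure Ω)
        = ∫ ω, (X 0 ω * X 1 ω) * (X 2 ω * X 3 ω) ∂(ℙ : Measure Ω) := by simp only [mul_assoc]
      _ = ((∫ ω, X 0 ω ∂(ℙ : Measure Ω)) * (∫ ω, X 0 ω ∂(ℙ : Measure Ω))) * ((∫ ω, X 0 ω ∂(ℙ : Measure Ω)) * (∫ ω, X 0 ω ∂(ℙ : Measure Ω))) := by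
          rw [h, hpair 0 1 (by decide), hpair 2 3 (by decide)]
  have hIpair : ∀ i j : Fin 4, i ≠ j → Integrable (fun ω => X i ω * X j ω) (ℙ : Measure Ω) :=
    fun i j hij => (hindep.indepFun hij).integrable_mul (hint1 i) (hint1 j)
  have hIcube : ∀ i j : Fin 4, i ≠ j → Integrable (fun ω => X i ω ^ 3 * X j ω) (ℙ : Measure Ω) :=
    fun i j hij => ((hindep.indepFun hij).comp (measurable_id.pow_const 3)
      measurable_id).integrable_mul (hint i 3 (by norm_num)) (hint1 j)
  have hIsq : ∀ i j k : Fin 4, i ≠ j → i ≠ k → j ≠ k →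
      Integrable (fun ω => X i ω ^ 2 * X j ω * X k ω) (ℙ : Measure Ω) := by
    intro i j k hij hik hjk
    have h : Integrable (fun ω => X i ω ^ 2 * (X j ω * X k ω)) (ℙ : Measure Ω) :=
      ((hindep.indepFun_mul_right hmeas i j k hij hik).comp (measurable_id.pow_const 2)
        measurable_id).integrable_mul (hint i 2 (by norm_num)) (hIpair j k hjk)
    have heq : (fun ω => X i ω ^ 2 * X j ω * X k ω)
        = (fun ω => X i ω ^ 2 * (X j ω * X k ω)) := by
      funext ω; ring
    rw [heq]
    exact h
  have hIquad : Integrable (fun ω => X 0 ω * X 1 ω * X 2 ω * X 3 ω) (ℙ : Measure Ω) := by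
    have h : Integrable (fun ω => (X 0 ω * X 1 ω) * (X 2 ω * X 3 ω)) (ℙ : Measure Ω) :=
      (hindep.indepFun_mul_mul hmeas 0 1 2 3 (by decide) (by decide) (by decide)
        (by decide)).integrable_mul (hIpair 0 1 (by decide)) (hIpair 2 3 (by decide))
    have heq : (fun ω => X 0 ω * X 1 ω * X 2 ω * X 3 ω)
        = (fun ω => (X 0 ω * X 1 ω) * (X 2 ω * X 3 ω)) := by
      funext ω; ring
    rw [heq]
    exact h

  have pA1 : Integrable (fun ω => X 0 ω ^ 4) (ℙ : Measure Ω) := hint 0 4 le_rfl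
  have pA2 : Integrable (fun ω => X 0 ω ^ 4 + X 1 ω ^ 4) (ℙ : Measure Ω) := pA1.add (hint 1 4 le_rfl)
  have pA3 : Integrable (fun ω => X 0 ω ^ 4 + X 1 ω ^ 4 + X 2 ω ^ 4) (ℙ : Measure Ω) := pA2.add (hint 2 4 le_rfl)
  have pA4 : Integrable (fun ω => X 0 ω ^ 4 + X 1 ω ^ 4 + X 2 ω ^ 4 + X 3 ω ^ 4) (ℙ : Measure Ω) := pA3.add (hint 3 4 le_rfl)
  have pB1 : Integrable (fun ω => X 0 ω ^ 3 * X 1 ω) (ℙ : Measure Ω) := hIcube 0 1 (by decide)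
  have pB2 : Integrable (fun ω => X 0 ω ^ 3 * X 1 ω + X 0 ω ^ 3 * X 2 ω) (ℙ : Measure Ω) := pB1.add (hIcube 0 2 (by decide))
  have pB3 : Integrable (fun ω => X 0 ω ^ 3 * X 1 ω + X 0 ω ^ 3 * X 2 ω + X 0 ω ^ 3 * X 3 ω) (ℙ : Measure Ω) := pB2.add (hIcube 0 3 (by decide))
  have pB4 : Integrable (fun ω => X 0 ω ^ 3 * X 1 ω + X 0 ω ^ 3 * X 2 ω + X 0 ω ^ 3 * X 3 ω + X 1 ω ^ 3 * X 0 ω) (ℙ : Measure Ω) := pB3.add (hIcube 1 0 (by decide))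
  have pB5 : Integrable (fun ω => X 0 ω ^ 3 * X 1 ω + X 0 ω ^ 3 * X 2 ω + X 0 ω ^ 3 * X 3 ω + X 1 ω ^ 3 * X 0 ω + X 1 ω ^ 3 * X 2 ω) (ℙ : Measure Ω) := pB4.add (hIcube 1 2 (by decide))
  have pB6 : Integrable (fun ω => X 0 ω ^ 3 * X 1 ω + X 0 ω ^ 3 * X 2 ω + X 0 ω ^ 3 * X 3 ω + X 1 ω ^ 3 * X 0 ω + X 1 ω ^ 3 * X 2 ω + X 1 ω ^ 3 * X 3 ω) (ℙ : Measure Ω) := pB5.add (hIcube 1 3 (by decide))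
  have pB7 : Integrable (fun ω => X 0 ω ^ 3 * X 1 ω + X 0 ω ^ 3 * X 2 ω + X 0 ω ^ 3 * X 3 ω + X 1 ω ^ 3 * X 0 ω + X 1 ω ^ 3 * X 2 ω + X 1 ω ^ 3 * X 3 ω + X 2 ω ^ 3 * X 0 ω) (ℙ : Measure Ω) := pB6.add (hIcube 2 0 (by decide))
  have pB8 : Integrable (fun ω => X 0 ω ^ 3 * X 1 ω + X 0 ω ^ 3 * X 2 ω + X 0 ω ^ 3 * X 3 ω + X 1 ω ^ 3 * X 0 ω + X 1 ω ^ 3 * X 2 ω + X 1 ω ^ 3 * X 3 ω + X 2 ω ^ 3 * X 0 ω + X 2 ω ^ 3 * X 1 ω) (ℙ : Measure Ω) := pB7.add (hIcube 2 1 (by decide))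
  have pB9 : Integrable (fun ω => X 0 ω ^ 3 * X 1 ω + X 0 ω ^ 3 * X 2 ω + X 0 ω ^ 3 * X 3 ω + X 1 ω ^ 3 * X 0 ω + X 1 ω ^ 3 * X 2 ω + X 1 ω ^ 3 * X 3 ω + X 2 ω ^ 3 * X 0 ω + X 2 ω ^ 3 * X 1 ω + X 2 ω ^ 3 * X 3 ω) (ℙ : Measure Ω) := pB8.add (hIcube 2 3 (by decide))
  have pB10 : Integrable (fun ω => X 0 ω ^ 3 * X 1 ω + X 0 ω ^ 3 * X 2 ω + X 0 ω ^ 3 * X 3 ω + X 1 ω ^ 3 * X 0 ω + X 1 ω ^ 3 * X 2 ω + X 1 ω ^ 3 * X 3 ω + X 2 ω ^ 3 * X 0 ω + X 2 ω ^ 3 * X 1 ω + X 2 ω ^ 3 * X 3 ω + X 3 ω ^ 3 * X 0 ω) (ℙ : Measure Ω) := pB9.add (hIcube 3 0 (by decide))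
  have pB11 : Integrable (fun ω => X 0 ω ^ 3 * X 1 ω + X 0 ω ^ 3 * X 2 ω + X 0 ω ^ 3 * X 3 ω + X 1 ω ^ 3 * X 0 ω + X 1 ω ^ 3 * X 2 ω + X 1 ω ^ 3 * X 3 ω + X 2 ω ^ 3 * X 0 ω + X 2 ω ^ 3 * X 1 ω + X 2 ω ^ 3 * X 3 ω + X 3 ω ^ 3 * X 0 ω + X 3 ω ^ 3 * X 1 ω) (ℙ : Measure Ω) := pB10.add (hIcube 3 1 (by decide))
  have pB12 : Integrable (fun ω => X 0 ω ^ 3 * X 1 ω + X 0 ω ^ 3 * X 2 ω + X 0 ω ^ 3 * X 3 ω + X 1 ω ^ 3 * X 0 ω + X 1 ω ^ 3 * X 2 ω + X 1 ω ^ 3 * X 3 ω + X 2 ω ^ 3 * X 0 ω + X 2 ω ^ 3 * X 1 ω + X 2 ω ^ 3 * X 3 ω + X 3 ω ^ 3 * X 0 ω + X 3 ω ^ 3 * X 1 ω + X 3 ω ^ 3 * X 2 ω) (ℙ : Measure Ω) := pB11.add (hIcube 3 2 (by decide))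
  have pC1 : Integrable (fun ω => X 2 ω ^ 2 * X 0 ω * X 1 ω) (ℙ : Measure Ω) := hIsq 2 0 1 (by decide) (by decide) (by decide)
  have pC2 : Integrable (fun ω => X 2 ω ^ 2 * X 0 ω * X 1 ω + X 3 ω ^ 2 * X 0 ω * X 1 ω) (ℙ : Measure Ω) := pC1.add (hIsq 3 0 1 (by decide) (by decide) (by decide))
  have pC3 : Integrable (fun ω => X 2 ω ^ 2 * X 0 ω * X 1 ω + X 3 ω ^ 2 * X 0 ω * X 1 ω + X 1 ω ^ 2 * X 0 ω * X 2 ω) (ℙ : Measure Ω) := pC2.add (hIsq 1 0 2 (by decide) (by decide) (by decide))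
  have pC4 : Integrable (fun ω => X 2 ω ^ 2 * X 0 ω * X 1 ω + X 3 ω ^ 2 * X 0 ω * X 1 ω + X 1 ω ^ 2 * X 0 ω * X 2 ω + X 3 ω ^ 2 * X 0 ω * X 2 ω) (ℙ : Measure Ω) := pC3.add (hIsq 3 0 2 (by decide) (by decide) (by decide))
  have pC5 : Integrable (fun ω => X 2 ω ^ 2 * X 0 ω * X 1 ω + X 3 ω ^ 2 * X 0 ω * X 1 ω + X 1 ω ^ 2 * X 0 ω * X 2 ω + X 3 ω ^ 2 * X 0 ω * X 2 ω + X 1 ω ^ 2 * X 0 ω * X 3 ω) (ℙ : Measure Ω) := pC4.add (hIsq 1 0 3 (by decide) (by decide) (by decide))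
  have pC6 : Integrable (fun ω => X 2 ω ^ 2 * X 0 ω * X 1 ω + X 3 ω ^ 2 * X 0 ω * X 1 ω + X 1 ω ^ 2 * X 0 ω * X 2 ω + X 3 ω ^ 2 * X 0 ω * X 2 ω + X 1 ω ^ 2 * X 0 ω * X 3 ω + X 2 ω ^ 2 * X 0 ω * X 3 ω) (ℙ : Measure Ω) := pC5.add (hIsq 2 0 3 (by decide) (by decide) (by decide))
  have pC7 : Integrable (fun ω => X 2 ω ^ 2 * X 0 ω * X 1 ω + X 3 ω ^ 2 * X 0 ω * X 1 ω + X 1 ω ^ 2 * X 0 ω * X 2 ω + X 3 ω ^ 2 * X 0 ω * X 2 ω + X 1 ω ^ 2 * X 0 ω * X 3 ω + X 2 ω ^ 2 * X 0 ω * X 3 ω + X 0 ω ^ 2 * X 1 ω * X 2 ω) (ℙ : Measure Ω) := pC6.add (hIsq 0 1 2 (by decide) (by decide) (by decide))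
  have pC8 : Integrable (fun ω => X 2 ω ^ 2 * X 0 ω * X 1 ω + X 3 ω ^ 2 * X 0 ω * X 1 ω + X 1 ω ^ 2 * X 0 ω * X 2 ω + X 3 ω ^ 2 * X 0 ω * X 2 ω + X 1 ω ^ 2 * X 0 ω * X 3 ω + X 2 ω ^ 2 * X 0 ω * X 3 ω + X 0 ω ^ 2 * X 1 ω * X 2 ω + X 3 ω ^ 2 * X 1 ω * X 2 ω) (ℙ : Measure Ω) := pC7.add (hIsq 3 1 2 (by decide) (by decide) (by decide))
  have pC9 : Integrable (fun ω => X 2 ω ^ 2 * X 0 ω * X 1 ω + X 3 ω ^ 2 * X 0 ω * X 1 ω + X 1 ω ^ 2 * X 0 ω * X 2 ω + X 3 ω ^ 2 * X 0 ω * X 2 ω + X 1 ω ^ 2 * X 0 ω * X 3 ω + X 2 ω ^ 2 * X 0 ω * X 3 ω + X 0 ω ^ 2 * X 1 ω * X 2 ω + X 3 ω ^ 2 * X 1 ω * X 2 ω + X 0 ω ^ 2 * X 1 ω * X 3 ω) (ℙ : Measure Ω) := pC8.add (hIsq 0 1 3 (by decide) (by decide) (by decide))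
  have pC10 : Integrable (fun ω => X 2 ω ^ 2 * X 0 ω * X 1 ω + X 3 ω ^ 2 * X 0 ω * X 1 ω + X 1 ω ^ 2 * X 0 ω * X 2 ω + X 3 ω ^ 2 * X 0 ω * X 2 ω + X 1 ω ^ 2 * X 0 ω * X 3 ω + X 2 ω ^ 2 * X 0 ω * X 3 ω + X 0 ω ^ 2 * X 1 ω * X 2 ω + X 3 ω ^ 2 * X 1 ω * X 2 ω + X 0 ω ^ 2 * X 1 ω * X 3 ω + X 2 ω ^ 2 * X 1 ω * X 3 ω) (ℙ : Measure Ω) := pC9.add (hIsq 2 1 3 (by decide) (by decide) (by decide))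
  have pC11 : Integrable (fun ω => X 2 ω ^ 2 * X 0 ω * X 1 ω + X 3 ω ^ 2 * X 0 ω * X 1 ω + X 1 ω ^ 2 * X 0 ω * X 2 ω + X 3 ω ^ 2 * X 0 ω * X 2 ω + X 1 ω ^ 2 * X 0 ω * X 3 ω + X 2 ω ^ 2 * X 0 ω * X 3 ω + X 0 ω ^ 2 * X 1 ω * X 2 ω + X 3 ω ^ 2 * X 1 ω * X 2 ω + X 0 ω ^ 2 * X 1 ω * X 3 ω + X 2 ω ^ 2 * X 1 ω * X 3 ω + X 0 ω ^ 2 * X 2 ω * X 3 ω) (ℙ : Measure Ω) := pC10.add (hIsq 0 2 3 (by decide) (by decide) (by decide))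
  have pC12 : Integrable (fun ω => X 2 ω ^ 2 * X 0 ω * X 1 ω + X 3 ω ^ 2 * X 0 ω * X 1 ω + X 1 ω ^ 2 * X 0 ω * X 2 ω + X 3 ω ^ 2 * X 0 ω * X 2 ω + X 1 ω ^ 2 * X 0 ω * X 3 ω + X 2 ω ^ 2 * X 0 ω * X 3 ω + X 0 ω ^ 2 * X 1 ω * X 2 ω + X 3 ω ^ 2 * X 1 ω * X 2 ω + X 0 ω ^ 2 * X 1 ω * X 3 ω + X 2 ω ^ 2 * X 1 ω * X 3 ω + X 0 ω ^ 2 * X 2 ω * X 3 ω + X 1 ω ^ 2 * X 2 ω * X 3 ω) (ℙ : Measure Ω) := pC11.add (hIsq 1 2 3 (by decide) (by decide) (by decide))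
  have hA : ∫ ω, (X 0 ω ^ 4 + X 1 ω ^ 4 + X 2 ω ^ 4 + X 3 ω ^ 4) ∂(ℙ : Measure Ω) = 4 * (∫ ω, X 0 ω ^ 4 ∂(ℙ : Measure Ω)) := by
    rw [integral_add pA3 (hint 3 4 le_rfl),
      integral_add pA2 (hint 2 4 le_rfl),
      integral_add pA1 (hint 1 4 le_rfl),
      hmomk 1 4, hmomk 2 4, hmomk 3 4]
    ring
  have hB : ∫ ω, (X 0 ω ^ 3 * X 1 ω + X 0 ω ^ 3 * X 2 ω + X 0 ω ^ 3 * X 3 ω + X 1 ω ^ 3 * X 0 ω + X 1 ω ^ 3 * X 2 ω + X 1 ω ^ 3 * X 3 ω + X 2 ω ^ 3 * X 0 ω + X 2 ω ^ 3 * X 1 ω + X 2 ω ^ 3 * X 3 ω + X 3 ω ^ 3 * X 0 ω + X 3 ω ^ 3 * X 1 ω + X 3 ω ^ 3 * X 2 ω) ∂(ℙ : Measure Ω) = 12 * ((∫ ω, X 0 ω ^ 3 ∂(ℙ : Measure Ω)) * (∫ ω, X 0 ω ∂(ℙ : Measure Ω))) := by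
    rw [integral_add pB11 (hIcube 3 2 (by decide)),
      integral_add pB10 (hIcube 3 1 (by decide)),
      integral_add pB9 (hIcube 3 0 (by decide)),
      integral_add pB8 (hIcube 2 3 (by decide)),
      integral_add pB7 (hIcube 2 1 (by decide)),
      integral_add pB6 (hIcube 2 0 (by decide)),
      integral_add pB5 (hIcube 1 3 (by decide)),
      integral_add pB4 (hIcube 1 2 (by decide)),
      integral_add pB3 (hIcube 1 0 (by decide)),
      integral_add pB2 (hIcube 0 3 (by decide)),
      integral_add pB1 (hIcube 0 2 (by decide)),
      hcube 0 1 (by decide),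
      hcube 0 2 (by decide),
      hcube 0 3 (by decide),
      hcube 1 0 (by decide),
      hcube 1 2 (by decide),
      hcube 1 3 (by decide),
      hcube 2 0 (by decide),
      hcube 2 1 (by decide),
      hcube 2 3 (by decide),
      hcube 3 0 (by decide),
      hcube 3 1 (by decide),
      hcube 3 2 (by decide)]
    ring
  have hC : ∫ ω, (X 2 ω ^ 2 * X 0 ω * X 1 ω + X 3 ω ^ 2 * X 0 ω * X 1 ω + X 1 ω ^ 2 * X 0 ω * X 2 ω + X 3 ω ^ 2 * X 0 ω * X 2 ω + X 1 ω ^ 2 * X 0 ω * X 3 ω + X 2 ω ^ 2 * X 0 ω * X 3 ω + X 0 ω ^ 2 * X 1 ω * X 2 ω + X 3 ω ^ 2 * X 1 ω * X 2 ω + X 0 ω ^ 2 * X 1 ω * X 3 ω + X 2 ω ^ 2 * X 1 ω * X 3 ω + X 0 ω ^ 2 * X 2 ω * X 3 ω + X 1 ω ^ 2 * X 2 ω * X 3 ω) ∂(ℙ : Measure Ω) = 12 * ((∫ ω, X 0 ω ^ 2 ∂(ℙ : Measure Ω)) * ((∫ ω, X 0 ω ∂(ℙ : Measure Ω)) * (∫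 ω, X 0 ω ∂(ℙ : Measure Ω)))) := by
    rw [integral_add pC11 (hIsq 1 2 3 (by decide) (by decide) (by decide)),
      integral_add pC10 (hIsq 0 2 3 (by decide) (by decide) (by decide)),
      integral_add pC9 (hIsq 2 1 3 (by decide) (by decide) (by decide)),
      integral_add pC8 (hIsq 0 1 3 (by decide) (by decide) (by decide)),
      integral_add pC7 (hIsq 3 1 2 (by decide) (by decide) (by decide)),
      integral_add pC6 (hIsq 0 1 2 (by decide) (by decide) (by decide)),
      integral_add pC5 (hIsq 2 0 3 (by decide) (by decide) (by decide)),
      integral_add pC4 (hIsq 1 0 3 (by decide) (by decide) (by decide)),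
      integral_add pC3 (hIsq 3 0 2 (by decide) (by decide) (by decide)),
      integral_add pC2 (hIsq 1 0 2 (by decide) (by decide) (by decide)),
      integral_add pC1 (hIsq 3 0 1 (by decide) (by decide) (by decide)),
      hsq 2 0 1 (by decide) (by decide) (by decide),
      hsq 3 0 1 (by decide) (by decide) (by decide),
      hsq 1 0 2 (by decide) (by decide) (by decide),
      hsq 3 0 2 (by decide) (by decide) (by decide),
      hsq 1 0 3 (by decide) (by decide) (by decide),
      hsq 2 0 3 (by decide) (by decide) (by decide),
      hsq 0 1 2 (by decide) (by decide) (by decide),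
      hsq 3 1 2 (by decide) (by decide) (by decide),
      hsq 0 1 3 (by decide) (by decide) (by decide),
      hsq 2 1 3 (by decide) (by decide) (by decide),
      hsq 0 2 3 (by decide) (by decide) (by decide),
      hsq 1 2 3 (by decide) (by decide) (by decide)]
    ring
  have hD : ∫ ω, 3 * X 0 ω * X 1 ω * X 2 ω * X 3 ω ∂(ℙ : Measure Ω) = 3 * (((∫ ω, X 0 ω ∂(ℙ : Measure Ω)) * (∫ ω, X 0 ω ∂(ℙ : Measure Ω))) * ((∫ ω, X 0 ω ∂(ℙ : Measure Ω)) * (∫ ω, X 0 ω ∂(ℙ : Measure Ω)))) := by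
    have heq : (fun ω => 3 * X 0 ω * X 1 ω * X 2 ω * X 3 ω) = (fun ω => 3 * (X 0 ω * X 1 ω * X 2 ω * X 3 ω)) := by
      funext ω; ring
    rw [heq, integral_const_mul, hquad]
  have hRHS : ∫ ω, (X 0 ω - (∫ ω', X 0 ω' ∂(ℙ : Measure Ω))) ^ 4 ∂(ℙ : Measure Ω)
      = (∫ ω, X 0 ω ^ 4 ∂(ℙ : Measure Ω)) - 4 * (∫ ω, X 0 ω ∂(ℙ : Measure Ω)) * (∫ ω, X 0 ω ^ 3 ∂(ℙ : Measure Ω)) + 6 * (∫ ω, X 0 ω ∂(ℙ : Measure Ω)) ^ 2 * (∫ ω, X 0 ω ^ 2 ∂(ℙ : Measure Ω))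
        - 3 * (∫ ω, X 0 ω ∂(ℙ : Measure Ω)) ^ 4 := by
    have hfun : (fun ω => (X 0 ω - (∫ ω, X 0 ω ∂(ℙ : Measure Ω))) ^ 4)
        = (fun ω => X 0 ω ^ 4 - (4 * (∫ ω, X 0 ω ∂(ℙ : Measure Ω))) * X 0 ω ^ 3 + (6 * (∫ ω, X 0 ω ∂(ℙ : Measure Ω)) ^ 2) * X 0 ω ^ 2
            - (4 * (∫ ω, X 0 ω ∂(ℙ : Measure Ω)) ^ 3) * X 0 ω + (∫ ω, X 0 ω ∂(ℙ : Measure Ω)) ^ 4) := by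
      funext ω; ring
    have i1 : Integrable (fun ω => X 0 ω ^ 4) (ℙ : Measure Ω) := hint 0 4 le_rfl
    have i2 : Integrable (fun ω => (4 * (∫ ω, X 0 ω ∂(ℙ : Measure Ω))) * X 0 ω ^ 3) (ℙ : Measure Ω) :=
      (hint 0 3 (by norm_num)).const_mul _
    have i3 : Integrable (fun ω => (6 * (∫ ω, X 0 ω ∂(ℙ : Measure Ω)) ^ 2) * X 0 ω ^ 2) (ℙ : Measure Ω) :=
      (hint 0 2 (by norm_num)).const_mul _
    have i4 : Integrable (fun ω => (4 * (∫ ω, X 0 ω ∂(ℙ : Measure Ω)) ^ 3) * X 0 ω) (ℙ : Measure Ω) :=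
      (hint1 0).const_mul _
    have s1 : Integrable (fun ω => X 0 ω ^ 4 - (4 * (∫ ω, X 0 ω ∂(ℙ : Measure Ω))) * X 0 ω ^ 3) (ℙ : Measure Ω) := i1.sub i2
    have s2 : Integrable (fun ω => X 0 ω ^ 4 - (4 * (∫ ω, X 0 ω ∂(ℙ : Measure Ω))) * X 0 ω ^ 3
        + (6 * (∫ ω, X 0 ω ∂(ℙ : Measure Ω)) ^ 2) * X 0 ω ^ 2) (ℙ : Measure Ω) := s1.add i3
    have s3 : Integrable (fun ω => X 0 ω ^ 4 - (4 * (∫ ω, X 0 ω ∂(ℙ : Measure Ω))) * X 0 ω ^ 3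
        + (6 * (∫ ω, X 0 ω ∂(ℙ : Measure Ω)) ^ 2) * X 0 ω ^ 2 - (4 * (∫ ω, X 0 ω ∂(ℙ : Measure Ω)) ^ 3) * X 0 ω) (ℙ : Measure Ω) := s2.sub i4
    rw [hfun, integral_add s3 (integrable_const _), integral_sub s2 i4, integral_add s1 i3,
      integral_sub i1 i2, integral_const_mul, integral_const_mul, integral_const_mul,
      integral_const]
    simp only [probReal_univ, one_smul]
    ring
  have IA' : Integrable (fun ω => 1 / 4 * (X 0 ω ^ 4 + X 1 ω ^ 4 + X 2 ω ^ 4 + X 3 ω ^ 4)) (ℙ : Measure Ω) := pA4.const_mul _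
  have IB' : Integrable (fun ω => 1 / 3 * (X 0 ω ^ 3 * X 1 ω + X 0 ω ^ 3 * X 2 ω + X 0 ω ^ 3 * X 3 ω + X 1 ω ^ 3 * X 0 ω + X 1 ω ^ 3 * X 2 ω + X 1 ω ^ 3 * X 3 ω + X 2 ω ^ 3 * X 0 ω + X 2 ω ^ 3 * X 1 ω + X 2 ω ^ 3 * X 3 ω + X 3 ω ^ 3 * X 0 ω + X 3 ω ^ 3 * X 1 ω + X 3 ω ^ 3 * X 2 ω)) (ℙ : Measure Ω) := pB12.const_mul _
  have IC' : Integrable (fun ω => 1 / 2 * (X 2 ω ^ 2 * X 0 ω * X 1 ω + X 3 ω ^ 2 * X 0 ω * X 1 ω + X 1 ω ^ 2 * X 0 ω * X 2 ω + X 3 ω ^ 2 * X 0 ω * X 2 ω + X 1 ω ^ 2 * X 0 ω * X 3 ω + X 2 ω ^ 2 * X 0 ω * X 3 ω + X 0 ω ^ 2 * X 1 ω * X 2 ω + X 3 ω ^ 2 * X 1 ω * X 2 ω + X 0 ω ^ 2 * X 1 ω * X 3 ω + X 2 ω ^ 2 * X 1 ω * X 3 ω + X 0 ω ^ 2 * X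 2 ω * X 3 ω + X 1 ω ^ 2 * X 2 ω * X 3 ω)) (ℙ : Measure Ω) := pC12.const_mul _
  have ID' : Integrable (fun ω => 3 * X 0 ω * X 1 ω * X 2 ω * X 3 ω) (ℙ : Measure Ω) := by
    have heq : (fun ω => 3 * X 0 ω * X 1 ω * X 2 ω * X 3 ω) = (fun ω => 3 * (X 0 ω * X 1 ω * X 2 ω * X 3 ω)) := by
      funext ω; ring
    rw [heq]
    exact hIquad.const_mul _
  have IAB : Integrable (fun ω => 1 / 4 * (X 0 ω ^ 4 + X 1 ω ^ 4 + X 2 ω ^ 4 + X 3 ω ^ 4) - 1 / 3 * (X 0 ω ^ 3 * X 1 ω + X 0 ω ^ 3 * X 2 ω + X 0 ω ^ 3 * X 3 ω + X 1 ω ^ 3 * X 0 ω + X 1 ω ^ 3 * X 2 ω + X 1 ω ^ 3 * X 3 ω + X 2 ω ^ 3 * X 0 ω + X 2 ω ^ 3 * X 1 ω + X 2 ω ^ 3 * X 3 ω + X 3 ω ^ 3 * X 0 ω + X 3 ω ^ 3 * X 1 ω + X 3 ω ^ 3 * X 2 ω)) (ℙ : Measure Ω) := IA'.sub IB'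
  have IABC : Integrable (fun ω => 1 / 4 * (X 0 ω ^ 4 + X 1 ω ^ 4 + X 2 ω ^ 4 + X 3 ω ^ 4) - 1 / 3 * (X 0 ω ^ 3 * X 1 ω + X 0 ω ^ 3 * X 2 ω + X 0 ω ^ 3 * X 3 ω + X 1 ω ^ 3 * X 0 ω + X 1 ω ^ 3 * X 2 ω + X 1 ω ^ 3 * X 3 ω + X 2 ω ^ 3 * X 0 ω + X 2 ω ^ 3 * X 1 ω + X 2 ω ^ 3 * X 3 ω + X 3 ω ^ 3 * X 0 ω + X 3 ω ^ 3 * X 1 ω + X 3 ω ^ 3 * X 2 ω) + 1 / 2 * (X 2 ω ^ 2 * X 0 ω * X 1 ω + X 3 ω ^ 2 * X 0 ω * X 1 ω + X 1 ω ^ 2 * X 0 ω * X 2 ω + X 3 ω ^ 2 * X 0 ω * X 2 ω + X 1 ω ^ 2 * X 0 ω * X 3 ω + X 2 ω ^ 2 * X 0 ω * X 3 ω + X 0 ω ^ 2 * X 1 ω * X 2 ω + X 3 ω ^ 2 * X 1 ω * X 2 ω + X 0 ω ^ 2 * X 1 ω * X 3 ω + X 2 ω ^ 2 * X 1 ω *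 X 3 ω + X 0 ω ^ 2 * X 2 ω * X 3 ω + X 1 ω ^ 2 * X 2 ω * X 3 ω)) (ℙ : Measure Ω) := IAB.add IC'
  simp only [psi4]
  rw [integral_sub IABC ID', integral_add IAB IC', integral_sub IA' IB',
    integral_const_mul, integral_const_mul, integral_const_mul, hA, hB, hC, hD, hRHS]
  ring
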